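/- arXiv:1205.0772 — 5 statements merged into one kernel-verified Lean document; each statement's English description precedes it below -/
import Mathlib

section
/- Let K be a field and S = K[t_1,...,t_s]. If a, b, α_1,...,α_r, β_1,...,β_r are vectors in ℕ^s and a - b lies in the subgroup of ℤ^s generated by α_1 - β_1, ..., α_r - β_r, then there exists a monomial t^δ (δ ∈ ℕ^s) such that t^δ·(t^a - t^b) belongs to the ideal of S generated by the binomials t^{α_1} - t^{β_1}, ..., t^{α_r} - t^{β_r}. -/
open MvPolynomial

noncomputable section

/-- View a function `Fin s → ℕ` as a finitely supported function (an exponent vector). -/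
abbrev toFs {s : ℕ} (a : Fin s → ℕ) : Fin s →₀ ℕ := Finsupp.equivFunOnFinite.symm a

/-- The coercion of an exponent vector to `ℤ`. -/
abbrev intVec {s : ℕ} (a : Fin s → ℕ) : Fin s → ℤ := fun i => (a i : ℤ)

/-- The lattice ideal `I(𝓛)` of a lattice `𝓛 ⊆ ℤ^s`, generated by the binomials
`t^{a⁺} - t^{a⁻}` for `a ∈ 𝓛`. -/
def latticeIdeal {s : ℕ} (K : Type*) [Field K] (𝓛 : AddSubgroup (Fin s → ℤ)) :
    Ideal (MvPolynomial (Fin s) K) :=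
  Ideal.span {f | ∃ a ∈ 𝓛,
    f = monomial (toFs fun i => (a i).toNat) (1 : K) - monomial (toFs fun i => (-a i).toNat) 1}

/-- A binomial `t^a - t^b`. -/
def IsBinomial {s : ℕ} {K : Type*} [Field K] (f : MvPolynomial (Fin s) K) : Prop :=
  ∃ a b : Fin s → ℕ, f = monomial (toFs a) (1 : K) - monomial (toFs b) 1

/-- The affine zero set `V(I) ⊆ 𝔸_K^s` of an ideal of `K[t_1, …, t_s]`. -/
def zeroSet {s : ℕ} {K : Type*} [Field K] (I : Ideal (MvPolynomial (Fin s) K)) :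
    Set (Fin s → K) := {x | ∀ f ∈ I, eval x f = 0}

/-- The height of an ideal: the infimum of the heights of the primes containing it. -/
def idealHeight {R : Type*} [CommRing R] (I : Ideal R) : ℕ∞ :=
  ⨅ p ∈ {p : PrimeSpectrum R | I ≤ p.asIdeal}, Order.height p

/-!
Invert all variables: in `L = (S ⧸ I)[t⁻¹]` the map `v ↦ t^v` is a group homomorphism
from `ℤ^s` to `Lˣ`. It kills every `α_j - β_j` because `t^{α_j} - t^{β_j} ∈ I`, hence kills
`a - b`, so `t^a = t^b` in `L`. Equality in a localization away from `t_1 ⋯ t_s` means that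
`(t_1 ⋯ t_s)^n (t^a - t^b) ∈ I` for some `n`.
-/

namespace MvPolynomial

variable {σ R Q : Type*} [Fintype σ] [CommSemiring R] [CommSemiring Q]
  {f : MvPolynomial σ R →+* Q}

def zpowMonomial (hf : ∀ i, IsUnit (f (X i))) : (σ → ℤ) →ₗ[ℤ] Additive Qˣ :=
  Fintype.linearCombination ℤ fun i => Additive.ofMul (hf i).unit

theorem coe_zpowMonomial_natCast (hf : ∀ i, IsUnit (f (X i))) (d : σ →₀ ℕ) :
    ((zpowMonomial hf fun i => (d i : ℤ)).toMul : Q) = f (monomial d 1) := by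
  simp [zpowMonomial, Fintype.linearCombination_apply, monomial_eq, Finsupp.prod_fintype]

theorem zpowMonomial_sub_eq_zero_iff (hf : ∀ i, IsUnit (f (X i))) (a b : σ →₀ ℕ) :
    zpowMonomial hf ((fun i => (a i : ℤ)) - fun i => (b i : ℤ)) = 0 ↔
      f (monomial a 1) = f (monomial b 1) := by
  rw [map_sub, sub_eq_zero, ← coe_zpowMonomial_natCast hf a, ← coe_zpowMonomial_natCast hf b,
    Units.val_inj, Additive.toMul.injective.eq_iff]

theorem map_monomial_eq_of_sub_mem_closure {ι : Type*} (hf : ∀ i, IsUnit (f (X i)))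
    {α β : ι → σ →₀ ℕ} (hαβ : ∀ j, f (monomial (α j) 1) = f (monomial (β j) 1))
    {a b : σ →₀ ℕ}
    (h : (fun i => (a i : ℤ)) - (fun i => (b i : ℤ)) ∈
      AddSubgroup.closure (Set.range fun j => (fun i => (α j i : ℤ)) - fun i => (β j i : ℤ))) :
    f (monomial a 1) = f (monomial b 1) := by
  rw [← zpowMonomial_sub_eq_zero_iff hf]
  refine (AddSubgroup.closure_le (K := (zpowMonomial hf).toAddMonoidHom.ker)).mpr ?_ h
  rintro _ ⟨j, rfl⟩
  exact (zpowMonomial_sub_eq_zero_iff hf _ _).mpr (hαβ j)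

theorem prod_X_pow_eq_monomial_const (n : ℕ) :
    (∏ i, X i : MvPolynomial σ R) ^ n = monomial (Finsupp.equivFunOnFinite.symm fun _ => n) 1 := by
  simp [← Finset.prod_pow, monomial_eq, Finsupp.prod_fintype]

end MvPolynomial

theorem Ideal.exists_pow_mul_sub_mem_of_algebraMap_eq {A L : Type*} [CommRing A] [CommRing L]
    {I : Ideal A} {x : A} [Algebra (A ⧸ I) L] [IsLocalization.Away (Ideal.Quotient.mk I x) L]
    {p q : A} (h : algebraMap (A ⧸ I) L (Ideal.Quotient.mk I p) =
      algebraMap (A ⧸ I) L (Ideal.Quotient.mk I q)) :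
    ∃ n : ℕ, x ^ n * (p - q) ∈ I := by
  obtain ⟨n, hn⟩ := IsLocalization.Away.exists_of_eq (Ideal.Quotient.mk I x) h
  refine ⟨n, Ideal.Quotient.eq_zero_iff_mem.mp ?_⟩
  rw [map_mul, map_sub, map_pow, mul_sub, hn, sub_self]

theorem binomial_multiple_in_span {s r : ℕ} (K : Type*) [Field K]
    (a b : Fin s → ℕ) (α β : Fin r → Fin s → ℕ)
    (h : intVec a - intVec b ∈ AddSubgroup.closure (Set.range fun j => intVec (α j) - intVec (β j))) :
    ∃ δ : Fin s → ℕ,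
      monomial (toFs δ) (1 : K) * (monomial (toFs a) 1 - monomial (toFs b) 1) ∈
        Ideal.span (Set.range fun j =>
          monomial (toFs (α j)) (1 : K) - monomial (toFs (β j)) 1) := by
  set I := Ideal.span (Set.range fun j =>
    monomial (toFs (α j)) (1 : K) - monomial (toFs (β j)) 1)
  let t : MvPolynomial (Fin s) K := ∏ i, X i
  let L := Localization.Away (Ideal.Quotient.mk I t)
  let π := (algebraMap _ L).comp (Ideal.Quotient.mk I)
  have hX (i : Fin s) : IsUnit (π (X i)) :=
    IsLocalization.Away.isUnit_of_dvd (Ideal.Quotient.mk I t)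
      (map_dvd (Ideal.Quotient.mk I) (Finset.dvd_prod_of_mem X (Finset.mem_univ i)))
  have hαβ (j : Fin r) : π (monomial (toFs (α j)) 1) = π (monomial (toFs (β j)) 1) := by
    rw [← sub_eq_zero, ← map_sub, RingHom.comp_apply,
      Ideal.Quotient.eq_zero_iff_mem.mpr (Ideal.subset_span (Set.mem_range_self j)), map_zero]
  obtain ⟨n, hn⟩ := Ideal.exists_pow_mul_sub_mem_of_algebraMap_eq (I := I) (x := t) (L := L)
    (map_monomial_eq_of_sub_mem_closure (a := toFs a) (b := toFs b) hX hαβ h)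
  exact ⟨fun _ => n, by rwa [prod_X_pow_eq_monomial_const] at hn⟩
end
end

section
/- Let L ⊂ S be a binomial ideal. Then L is a lattice ideal (i.e., L = I(𝓛) for some lattice 𝓛 ⊂ ℤ^s) if and only if each variable t_i is a non-zerodivisor on the quotient ring S/L. -/
open MvPolynomial

noncomputable section

/-!
`I(𝓛)` is the kernel of the monomial map `K[t] → K[ℤ^s/𝓛]`, `t^d ↦ [d]`. Indeed, the kernel of a
map of group algebras induced by a map `π` of exponents is spanned by the differences `t^a - t^b`
with `π a = π b`, and each of these is a monomial multiple of the generator `t^{c⁺} - t^{c⁻}`,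
`c = a - b`. The variables become units in the group algebra, so they are nonzerodivisors
modulo `I(𝓛)`.

Conversely, if the variables, hence all monomials, are nonzerodivisors modulo `L`, the vectors `a`
with `t^{a⁺} - t^{a⁻} ∈ L` form a lattice `𝓛` with `I(𝓛) ⊆ L`. A binomial generator of `L` is
`t^u - t^v = t^{min(u,v)} (t^{c⁺} - t^{c⁻})` with `c = u - v`; cancelling the monomial puts `c`
in `𝓛`, hence `t^u - t^v` in `I(𝓛)`.
-/

namespace AddMonoidAlgebra

variable {R M N P : Type*}

lemma mapDomain_comp [Semiring R] (f : M → N) (g : N → P) (x : AddMonoidAlgebra R M) :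
    mapDomain (g ∘ f) x = mapDomain g (mapDomain f x) := by
  ext; simp [Finsupp.mapDomain_comp]

theorem sub_mapDomain_mem_span [Ring R] (f : M → N) (g : N → M) (hg : ∀ a, f (g (f a)) = f a)
    (x : AddMonoidAlgebra R M) :
    x - mapDomain (g ∘ f) x ∈
      Submodule.span R {y | ∃ a b, f a = f b ∧ y = single a (1 : R) - single b 1} := by
  induction x using induction_linear with
  | zero => simp
  | add x y hx hy =>
    rw [mapDomain_add, add_sub_add_comm]
    exact add_mem hx hy
  | single a r =>
    have : single a r - single (g (f a)) r = r • (single a (1 : R) - single (g (f a)) 1) := by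
      rw [smul_sub, smul_single, smul_single, smul_eq_mul, mul_one]
    rw [mapDomain_single, Function.comp_apply, this]
    exact Submodule.smul_mem _ _ (Submodule.subset_span ⟨a, _, (hg a).symm, rfl⟩)

theorem mem_span_of_mapDomain_eq_zero [Ring R] [Nonempty M] {f : M → N} {x : AddMonoidAlgebra R M}
    (hx : mapDomain f x = 0) :
    x ∈ Submodule.span R {y | ∃ a b, f a = f b ∧ y = single a (1 : R) - single b 1} := by
  have h := sub_mapDomain_mem_span f (Function.invFun f) (fun a => Function.invFun_eq ⟨a, rfl⟩) x
  rwa [mapDomain_comp, hx, mapDomain_zero, sub_zero] at h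

end AddMonoidAlgebra

section Binomials

variable {s : ℕ} {R : Type*} [CommRing R]

lemma toFs_add (a b : Fin s → ℕ) : toFs (a + b) = toFs a + toFs b :=
  map_add (Finsupp.linearEquivFunOnFinite ℕ ℕ (Fin s)).symm a b

lemma monomial_toFs_mul (a b : Fin s → ℕ) :
    monomial (toFs a) (1 : R) * monomial (toFs b) 1 = monomial (toFs (a + b)) 1 := by
  rw [monomial_mul, mul_one, toFs_add]

variable (R) in
def latticeBinomial (a : Fin s → ℤ) : MvPolynomial (Fin s) R :=
  monomial (toFs fun i => (a i).toNat) 1 - monomial (toFs fun i => (-a i).toNat) 1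

lemma latticeBinomial_zero : latticeBinomial R (0 : Fin s → ℤ) = 0 := by
  simp [latticeBinomial]

lemma latticeBinomial_neg (a : Fin s → ℤ) : latticeBinomial R (-a) = -latticeBinomial R a := by
  simp only [latticeBinomial, Pi.neg_apply, neg_neg, neg_sub]

lemma monomial_sub_monomial_eq_mul_latticeBinomial (a b : Fin s → ℕ) :
    monomial (toFs a) (1 : R) - monomial (toFs b) 1 =
      monomial (toFs (a ⊓ b)) 1 * latticeBinomial R (intVec a - intVec b) := by
  rw [latticeBinomial, mul_sub, monomial_toFs_mul, monomial_toFs_mul]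
  congr 3 <;> refine congrArg toFs (_root_.funext fun i => ?_) <;>
    simp only [Pi.add_apply, Pi.inf_apply, Pi.sub_apply, intVec] <;> omega

end Binomials

section LatticeIdeal

variable {s : ℕ} {K : Type*} [Field K] (𝓛 : AddSubgroup (Fin s → ℤ))

def latticeClass : (Fin s →₀ ℕ) →+ (Fin s → ℤ) ⧸ 𝓛 :=
  (QuotientAddGroup.mk' 𝓛).comp
    (((Nat.castAddMonoidHom ℤ).compLeft (Fin s)).comp Finsupp.coeFnAddHom)

lemma latticeClass_toFs_eq_iff {a b : Fin s → ℕ} :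
    latticeClass 𝓛 (toFs a) = latticeClass 𝓛 (toFs b) ↔ intVec a - intVec b ∈ 𝓛 :=
  QuotientAddGroup.eq_iff_sub_mem

lemma monomial_sub_monomial_mem_latticeIdeal {a b : Fin s → ℕ} (h : intVec a - intVec b ∈ 𝓛) :
    monomial (toFs a) (1 : K) - monomial (toFs b) 1 ∈ latticeIdeal K 𝓛 := by
  rw [monomial_sub_monomial_eq_mul_latticeBinomial]
  exact Ideal.mul_mem_left _ _ (Ideal.subset_span ⟨_, h, rfl⟩)

variable (K) in
def latticeQuotientMap : MvPolynomial (Fin s) K →+* AddMonoidAlgebra K ((Fin s → ℤ) ⧸ 𝓛) :=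
  AddMonoidAlgebra.mapDomainRingHom K (latticeClass 𝓛)

lemma latticeQuotientMap_monomial (d : Fin s →₀ ℕ) (c : K) :
    latticeQuotientMap K 𝓛 (monomial d c) = AddMonoidAlgebra.single (latticeClass 𝓛 d) c := by
  rw [← single_eq_monomial]
  exact AddMonoidAlgebra.mapDomain_single

theorem latticeIdeal_eq_ker : latticeIdeal K 𝓛 = RingHom.ker (latticeQuotientMap K 𝓛) := by
  apply le_antisymm
  · rw [latticeIdeal, Ideal.span_le]
    rintro _ ⟨a, ha, rfl⟩
    rw [SetLike.mem_coe, RingHom.mem_ker, map_sub, latticeQuotientMap_monomial,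
      latticeQuotientMap_monomial, sub_eq_zero]
    congr 1
    rw [latticeClass_toFs_eq_iff]
    convert ha using 1
    ext i
    simp only [intVec, Pi.sub_apply]
    omega
  · intro f hf
    have hspan := AddMonoidAlgebra.mem_span_of_mapDomain_eq_zero (R := K) hf
    refine Submodule.span_le (p := (latticeIdeal K 𝓛).restrictScalars K) |>.2 ?_ hspan
    rintro _ ⟨a, b, hab, rfl⟩
    rw [← Finsupp.equivFunOnFinite_symm_coe a, ← Finsupp.equivFunOnFinite_symm_coe b] at hab ⊢
    rw [single_eq_monomial, single_eq_monomial]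
    exact monomial_sub_monomial_mem_latticeIdeal 𝓛 ((latticeClass_toFs_eq_iff 𝓛).1 hab)

lemma isUnit_latticeQuotientMap_X (i : Fin s) : IsUnit (latticeQuotientMap K 𝓛 (X i)) := by
  rw [X, latticeQuotientMap_monomial]
  exact (Group.isUnit (Multiplicative.ofAdd _)).map (AddMonoidAlgebra.of K _)

theorem mem_latticeIdeal_of_X_mul_mem {i : Fin s} {f : MvPolynomial (Fin s) K}
    (hf : X i * f ∈ latticeIdeal K 𝓛) : f ∈ latticeIdeal K 𝓛 := by
  rw [latticeIdeal_eq_ker, RingHom.mem_ker, map_mul] at hf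
  rw [latticeIdeal_eq_ker, RingHom.mem_ker]
  exact (isUnit_latticeQuotientMap_X 𝓛 i).mul_right_eq_zero.1 hf

end LatticeIdeal

section Saturation

variable {R : Type*} [CommRing R]

lemma Ideal.Quotient.mk_mem_nonZeroDivisors_iff {I : Ideal R} {m : R} :
    Ideal.Quotient.mk I m ∈ nonZeroDivisors (R ⧸ I) ↔ ∀ f, m * f ∈ I → f ∈ I := by
  rw [mem_nonZeroDivisors_iff_left, Ideal.Quotient.mk_surjective.forall]
  simp only [← map_mul, Ideal.Quotient.eq_zero_iff_mem]

lemma mk_monomial_mem_nonZeroDivisors {σ : Type*} {I : Ideal (MvPolynomial σ R)}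
    (hX : ∀ i, Ideal.Quotient.mk I (X i) ∈ nonZeroDivisors _) (d : σ →₀ ℕ) :
    Ideal.Quotient.mk I (monomial d 1) ∈ nonZeroDivisors _ := by
  rw [monomial_eq, C_1, one_mul, Finsupp.prod, map_prod]
  exact prod_mem fun i _ => map_pow (Ideal.Quotient.mk I) (X i) (d i) ▸ pow_mem (hX i) _

variable {s : ℕ} {L : Ideal (MvPolynomial (Fin s) R)}
  (hL : ∀ i, Ideal.Quotient.mk L (X i) ∈ nonZeroDivisors _)
include hL

lemma latticeBinomial_mem_of_mul_mem {a : Fin s → ℤ} {d : Fin s →₀ ℕ}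
    (h : monomial d 1 * latticeBinomial R a ∈ L) : latticeBinomial R a ∈ L :=
  Ideal.Quotient.mk_mem_nonZeroDivisors_iff.1 (mk_monomial_mem_nonZeroDivisors hL d) _ h

-- `t^{a⁺+b⁺} - t^{a⁻+b⁻} = t^{a⁺} (t^{b⁺} - t^{b⁻}) + t^{b⁻} (t^{a⁺} - t^{a⁻})` is a monomial
-- multiple of the binomial of `a + b`.
lemma latticeBinomial_add_mem {a b : Fin s → ℤ} (ha : latticeBinomial R a ∈ L)
    (hb : latticeBinomial R b ∈ L) : latticeBinomial R (a + b) ∈ L := by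
  set u : Fin s → ℕ := (fun i => (a i).toNat) + fun i => (b i).toNat
  set v : Fin s → ℕ := (fun i => (-b i).toNat) + fun i => (-a i).toNat
  have hsplit : monomial (toFs u) (1 : R) - monomial (toFs v) 1 =
      monomial (toFs fun i => (a i).toNat) 1 * latticeBinomial R b +
        monomial (toFs fun i => (-b i).toNat) 1 * latticeBinomial R a := by
    simp only [latticeBinomial, mul_sub, monomial_toFs_mul, u, v, add_comm (fun i => (a i).toNat)]
    ring
  have huv : intVec u - intVec v = a + b := by
    ext i
    simp only [intVec, u, v, Pi.add_apply, Pi.sub_apply]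
    omega
  have hmem : monomial (toFs u) (1 : R) - monomial (toFs v) 1 ∈ L :=
    hsplit ▸ add_mem (L.mul_mem_left _ hb) (L.mul_mem_left _ ha)
  rw [monomial_sub_monomial_eq_mul_latticeBinomial, huv] at hmem
  exact latticeBinomial_mem_of_mul_mem hL hmem

def exponentLattice : AddSubgroup (Fin s → ℤ) where
  carrier := {a | latticeBinomial R a ∈ L}
  add_mem' := latticeBinomial_add_mem hL
  zero_mem' := by simp only [Set.mem_ofPred_eq, latticeBinomial_zero, zero_mem]
  neg_mem' := by simp only [Set.mem_ofPred_eq, latticeBinomial_neg, neg_mem_iff, imp_self,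
    implies_true]

end Saturation

section ExponentLattice

variable {s : ℕ} {K : Type*} [Field K] {L : Ideal (MvPolynomial (Fin s) K)}
  (hL : ∀ i, Ideal.Quotient.mk L (X i) ∈ nonZeroDivisors _)

lemma latticeIdeal_exponentLattice_le : latticeIdeal K (exponentLattice hL) ≤ L := by
  rw [latticeIdeal, Ideal.span_le]
  rintro _ ⟨a, ha, rfl⟩
  exact ha

lemma IsBinomial.mem_latticeIdeal_exponentLattice {g : MvPolynomial (Fin s) K}
    (hg : IsBinomial g) (hgL : g ∈ L) : g ∈ latticeIdeal K (exponentLattice hL) := by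
  obtain ⟨a, b, rfl⟩ := hg
  rw [monomial_sub_monomial_eq_mul_latticeBinomial] at hgL ⊢
  exact Ideal.mul_mem_left _ _ (Ideal.subset_span ⟨_, latticeBinomial_mem_of_mul_mem hL hgL, rfl⟩)

end ExponentLattice

theorem lattice_ideal_iff_variables_nonzerodivisors {s : ℕ} {K : Type*} [Field K]
    (L : Ideal (MvPolynomial (Fin s) K)) (G : Set (MvPolynomial (Fin s) K))
    (hG : ∀ g ∈ G, IsBinomial g) (hL : L = Ideal.span G) :
    (∃ 𝓛 : AddSubgroup (Fin s → ℤ), L = latticeIdeal K 𝓛) ↔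
      ∀ (i : Fin s) (f : MvPolynomial (Fin s) K), X i * f ∈ L → f ∈ L := by
  simp only [← Ideal.Quotient.mk_mem_nonZeroDivisors_iff]
  constructor
  · rintro ⟨𝓛, rfl⟩ i
    exact Ideal.Quotient.mk_mem_nonZeroDivisors_iff.2 fun f => mem_latticeIdeal_of_X_mul_mem 𝓛
  · intro hX
    refine ⟨exponentLattice hX, le_antisymm ?_ (latticeIdeal_exponentLattice_le hX)⟩
    refine hL.le.trans (Ideal.span_le.2 fun g hg => ?_)
    exact (hG g hg).mem_latticeIdeal_exponentLattice hX (hL ▸ Ideal.subset_span hg)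
end
end

section
/- Let I ⊂ S be a binomial ideal generated by binomials g_1, ..., g_r, and let 𝒢 ⊂ ℤ^s be the subgroup generated by ĝ_1, ..., ĝ_r (where for g = t^a - t^b, ĝ = a - b). If f is a nonzero polynomial in I, then every simple component of f with respect to the equivalence relation ∼_𝒢 belongs to I. -/
open MvPolynomial

noncomputable section

/-- The simple component of `f` with respect to `∼_𝒢` containing the monomial `t^{a₀}`:
the sum of all terms of `f` whose exponent is equivalent to `a₀` modulo `𝒢`. -/
def simpleComponent {s : ℕ} {K : Type*} [Field K] (𝒢 : AddSubgroup (Fin s → ℤ))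
    (f : MvPolynomial (Fin s) K) (a₀ : Fin s →₀ ℕ) : MvPolynomial (Fin s) K :=
  open Classical in
  (f.support.filter fun a => ((fun i => (a i : ℤ)) - fun i => (a₀ i : ℤ)) ∈ 𝒢).sum
    fun a => monomial a (coeff a f)


/-!
Projecting onto the monomials of one `∼_𝒢`-class is a `K`-linear map, and as a `K`-vector space
the binomial ideal is spanned by the products `t^d (t^{a_j} - t^{b_j})`. Each such product is a
binomial whose two exponents differ by `a_j - b_j ∈ 𝒢`, so the projection sends it to itself or
to `0`; in either case the image lies in the ideal.
-/

namespace MvPolynomial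

open scoped Pointwise in
theorem map_mem_of_mem_ideal_span {σ R M : Type*} [CommSemiring R] [AddCommMonoid M]
    [Module R M] {s : Set (MvPolynomial σ R)} (φ : MvPolynomial σ R →ₗ[R] M)
    {N : Submodule R M} (hφ : ∀ g ∈ s, ∀ d, φ (monomial d 1 * g) ∈ N)
    {f : MvPolynomial σ R} (hf : f ∈ Ideal.span s) : φ f ∈ N := by
  have hmon : Submodule.span R (Set.range fun d => (monomial d 1 : MvPolynomial σ R)) = ⊤ := by
    rw [← coe_basisMonomials]
    exact (basisMonomials σ R).span_eq
  have hf' :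
      f ∈ Submodule.span R ((Set.range fun d => (monomial d 1 : MvPolynomial σ R)) • s) := by
    rwa [Submodule.span_smul_of_span_eq_top hmon]
  refine Submodule.span_le (p := N.comap φ) |>.mpr ?_ hf'
  rintro _ ⟨_, ⟨d, rfl⟩, g, hg, rfl⟩
  exact hφ g hg d

end MvPolynomial

theorem intVec_add_sub_intVec_add {s : ℕ} (d a b : Fin s → ℕ) :
    intVec (d + a) - intVec (d + b) = intVec a - intVec b := by
  ext i
  simp only [intVec, Pi.add_apply, Pi.sub_apply, Nat.cast_add]
  ring

section SimpleComponent

variable {s : ℕ} {K : Type*} [Field K] (𝒢 : AddSubgroup (Fin s → ℤ))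

open Classical in
theorem coeff_simpleComponent (f : MvPolynomial (Fin s) K) (a₀ m : Fin s →₀ ℕ) :
    coeff m (simpleComponent 𝒢 f a₀) =
      if intVec m - intVec a₀ ∈ 𝒢 then coeff m f else 0 := by
  simp only [simpleComponent, coeff_sum, coeff_monomial, Finset.sum_ite_eq', Finset.mem_filter,
    mem_support_iff]
  by_cases hm : coeff m f = 0 <;> simp [hm]

def simpleComponentLinearMap (a₀ : Fin s →₀ ℕ) :
    MvPolynomial (Fin s) K →ₗ[K] MvPolynomial (Fin s) K where
  toFun f := simpleComponent 𝒢 f a₀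
  map_add' f g := by
    ext m
    simp only [coeff_simpleComponent, coeff_add]
    split_ifs <;> simp
  map_smul' c f := by
    ext m
    simp only [coeff_simpleComponent, coeff_smul, RingHom.id_apply]
    split_ifs <;> simp

@[simp]
theorem simpleComponentLinearMap_apply (a₀ : Fin s →₀ ℕ) (f : MvPolynomial (Fin s) K) :
    simpleComponentLinearMap 𝒢 a₀ f = simpleComponent 𝒢 f a₀ :=
  rfl

open Classical in
theorem simpleComponent_monomial (e a₀ : Fin s →₀ ℕ) (c : K) :
    simpleComponent 𝒢 (monomial e c) a₀ =
      if intVec e - intVec a₀ ∈ 𝒢 then monomial e c else 0 := by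
  ext m
  rw [coeff_simpleComponent]
  by_cases hm : m = e
  · subst hm
    split_ifs <;> simp
  · split_ifs <;> simp [coeff_monomial, Ne.symm hm]

theorem simpleComponent_monomial_sub_monomial {e₁ e₂ : Fin s →₀ ℕ}
    (h : intVec e₁ - intVec e₂ ∈ 𝒢) (a₀ : Fin s →₀ ℕ) (c : K) :
    simpleComponent 𝒢 (monomial e₁ c - monomial e₂ c) a₀ = monomial e₁ c - monomial e₂ c ∨
      simpleComponent 𝒢 (monomial e₁ c - monomial e₂ c) a₀ = 0 := by
  have hequiv : intVec e₁ - intVec a₀ ∈ 𝒢 ↔ intVec e₂ - intVec a₀ ∈ 𝒢 := by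
    rw [← sub_add_sub_cancel (intVec e₁) (intVec e₂), 𝒢.add_mem_cancel_left h]
  rw [← simpleComponentLinearMap_apply, map_sub, simpleComponentLinearMap_apply,
    simpleComponentLinearMap_apply, simpleComponent_monomial, simpleComponent_monomial, ← hequiv]
  split_ifs <;> simp

end SimpleComponent

theorem simple_components_belong_general {s r : ℕ} {K : Type*} [Field K]
    (a b : Fin r → Fin s → ℕ) (I : Ideal (MvPolynomial (Fin s) K))
    (hI : I = Ideal.span (Set.range fun j =>
      monomial (toFs (a j)) (1 : K) - monomial (toFs (b j)) 1))
    (𝒢 : AddSubgroup (Fin s → ℤ))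
    (h𝒢 : 𝒢 = AddSubgroup.closure (Set.range fun j => intVec (a j) - intVec (b j)))
    (f : MvPolynomial (Fin s) K) (hf : f ∈ I) :
    ∀ a₀ : Fin s →₀ ℕ, simpleComponent 𝒢 f a₀ ∈ I := by
  intro a₀
  rw [hI] at hf
  refine MvPolynomial.map_mem_of_mem_ideal_span (simpleComponentLinearMap 𝒢 a₀)
    (N := I.restrictScalars K) ?_ hf
  rintro _ ⟨j, rfl⟩ d
  have hmem :
      monomial d 1 * (monomial (toFs (a j)) (1 : K) - monomial (toFs (b j)) 1) ∈ I :=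
    I.mul_mem_left _ (hI ▸ Ideal.subset_span ⟨j, rfl⟩)
  have hdiff : intVec ⇑(d + toFs (a j)) - intVec ⇑(d + toFs (b j)) ∈ 𝒢 := by
    rw [Finsupp.coe_add, Finsupp.coe_add, intVec_add_sub_intVec_add]
    exact h𝒢 ▸ AddSubgroup.subset_closure ⟨j, rfl⟩
  rw [mul_sub, monomial_mul, monomial_mul, one_mul] at hmem ⊢
  rcases simpleComponent_monomial_sub_monomial 𝒢 hdiff a₀ (1 : K) with h | h
  · simpa [h] using hmem
  · simp [h]

theorem simple_components_belong {s r : ℕ} {K : Type*} [Field K]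
    (a b : Fin r → Fin s → ℕ) (I : Ideal (MvPolynomial (Fin s) K))
    (hI : I = Ideal.span (Set.range fun j =>
      monomial (toFs (a j)) (1 : K) - monomial (toFs (b j)) 1))
    (𝒢 : AddSubgroup (Fin s → ℤ))
    (h𝒢 : 𝒢 = AddSubgroup.closure (Set.range fun j => intVec (a j) - intVec (b j)))
    (f : MvPolynomial (Fin s) K) (hf0 : f ≠ 0) (hf : f ∈ I) :
    ∀ a₀ : Fin s →₀ ℕ, simpleComponent 𝒢 f a₀ ∈ I :=
  simple_components_belong_general a b I hI 𝒢 h𝒢 f hf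
end
end

section
/- Let I ⊂ S be a binomial ideal such that the zero set V(I, t_i) = {0} in affine space 𝔸_K^s for every i = 1,...,s. If 𝔭 is a prime ideal of S containing (I, t_m) for some m, then 𝔭 = (t_1,...,t_s). -/
/-!
For a prime `𝔭`, evaluate at the point `x` with `xᵢ = 0` if `tᵢ ∈ 𝔭` and `xᵢ = 1` otherwise. A monic
monomial lies in `𝔭` exactly when it vanishes at `x`, and otherwise takes the value `1` there, so
every binomial in `𝔭` vanishes at `x`. If `𝔭 ⊇ (I, t_m)`, then `x ∈ V(I, t_m) = {0}`, i.e. every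
variable lies in `𝔭`; as `(t_1, …, t_s)` is maximal, it equals `𝔭`.
-/

open MvPolynomial

noncomputable section

namespace MvPolynomial

variable {σ R K : Type*} [CommSemiring R] [Field K]

theorem idealOfVars_eq_ker_constantCoeff : idealOfVars σ R = RingHom.ker constantCoeff := by
  ext f
  rw [← pow_one (idealOfVars σ R), mem_pow_idealOfVars_iff', RingHom.mem_ker, constantCoeff_eq]
  simp only [Nat.lt_one_iff, Finsupp.degree_eq_zero_iff, forall_eq]

theorem isMaximal_idealOfVars : (idealOfVars σ K).IsMaximal := by
  rw [idealOfVars_eq_ker_constantCoeff]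
  exact RingHom.ker_isMaximal_of_surjective _ fun c => ⟨C c, constantCoeff_C σ c⟩

theorem monomial_one_mem_iff_exists_X_mem (𝔭 : Ideal (MvPolynomial σ R)) [𝔭.IsPrime]
    (a : σ →₀ ℕ) : monomial a (1 : R) ∈ 𝔭 ↔ ∃ i ∈ a.support, X i ∈ 𝔭 := by
  rw [monomial_eq, C_1, one_mul, Finsupp.prod, Ideal.IsPrime.prod_mem_iff]
  refine exists_congr fun i => and_congr_right fun hi => ?_
  exact ‹𝔭.IsPrime›.pow_mem_iff_mem _ (Nat.pos_of_ne_zero (Finsupp.mem_support_iff.mp hi))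

def indicatorPoint (𝔭 : Ideal (MvPolynomial σ K)) : σ → K :=
  Set.indicator {i | X i ∉ 𝔭} 1

theorem indicatorPoint_eq_zero_iff {𝔭 : Ideal (MvPolynomial σ K)} :
    indicatorPoint 𝔭 = 0 ↔ ∀ i, X i ∈ 𝔭 := by
  simp [indicatorPoint, Set.eq_empty_iff_forall_notMem]

section indicatorPoint

variable {𝔭 : Ideal (MvPolynomial σ K)} [𝔭.IsPrime] {a b : σ →₀ ℕ}

theorem eval_indicatorPoint_monomial_one_of_mem (ha : monomial a (1 : K) ∈ 𝔭) :
    eval (indicatorPoint 𝔭) (monomial a 1) = 0 := by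
  obtain ⟨i, hi, hXi⟩ := (monomial_one_mem_iff_exists_X_mem 𝔭 a).mp ha
  rw [eval_monomial, one_mul]
  refine Finset.prod_eq_zero hi ?_
  simp [indicatorPoint, hXi, Finsupp.mem_support_iff.mp hi]

theorem eval_indicatorPoint_monomial_one_of_notMem (ha : monomial a (1 : K) ∉ 𝔭) :
    eval (indicatorPoint 𝔭) (monomial a 1) = 1 := by
  simp only [monomial_one_mem_iff_exists_X_mem, not_exists, not_and] at ha
  rw [eval_monomial, one_mul]
  exact Finset.prod_eq_one fun i hi => by simp [indicatorPoint, ha i hi]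

theorem eval_indicatorPoint_eq_zero_of_sub_mem (h : monomial a (1 : K) - monomial b 1 ∈ 𝔭) :
    eval (indicatorPoint 𝔭) (monomial a 1 - monomial b 1) = 0 := by
  rw [map_sub, sub_eq_zero]
  by_cases ha : monomial a (1 : K) ∈ 𝔭
  · have hb : monomial b (1 : K) ∈ 𝔭 := (𝔭.sub_mem_iff_right ha).mp h
    rw [eval_indicatorPoint_monomial_one_of_mem ha, eval_indicatorPoint_monomial_one_of_mem hb]
  · have hb : monomial b (1 : K) ∉ 𝔭 := fun hb => ha ((𝔭.sub_mem_iff_left hb).mp h)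
    rw [eval_indicatorPoint_monomial_one_of_notMem ha,
      eval_indicatorPoint_monomial_one_of_notMem hb]

end indicatorPoint

end MvPolynomial

theorem IsBinomial.eval_indicatorPoint_eq_zero {s : ℕ} {K : Type*} [Field K]
    {𝔭 : Ideal (MvPolynomial (Fin s) K)} [𝔭.IsPrime] {g : MvPolynomial (Fin s) K}
    (hg : IsBinomial g) (hg𝔭 : g ∈ 𝔭) : eval (indicatorPoint 𝔭) g = 0 := by
  obtain ⟨a, b, rfl⟩ := hg
  exact eval_indicatorPoint_eq_zero_of_sub_mem hg𝔭

theorem prime_containing_binomial_ideal_and_variable {s : ℕ} {K : Type*} [Field K]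
    (I : Ideal (MvPolynomial (Fin s) K)) (G : Set (MvPolynomial (Fin s) K))
    (hG : ∀ g ∈ G, IsBinomial g) (hI : I = Ideal.span G)
    (hV : ∀ i : Fin s, zeroSet (I ⊔ Ideal.span {X i}) = {0})
    (𝔭 : Ideal (MvPolynomial (Fin s) K)) (h𝔭 : 𝔭.IsPrime) (m : Fin s)
    (hm : I ⊔ Ideal.span {X m} ≤ 𝔭) :
    𝔭 = Ideal.span (Set.range (X : Fin s → MvPolynomial (Fin s) K)) := by
  have hXm : X m ∈ 𝔭 := hm (Ideal.mem_sup_right (Ideal.mem_span_singleton_self _))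
  have hx : indicatorPoint 𝔭 ∈ zeroSet (I ⊔ Ideal.span {X m}) := by
    change I ⊔ _ ≤ RingHom.ker (eval _)
    rw [hI, sup_le_iff, Ideal.span_le, Ideal.span_singleton_le_iff_mem]
    refine ⟨fun g hg => (hG g hg).eval_indicatorPoint_eq_zero (hm ?_), ?_⟩
    · exact Ideal.mem_sup_left (hI ▸ Ideal.subset_span hg)
    · simp [indicatorPoint, hXm]
  rw [hV m, Set.mem_singleton_iff, indicatorPoint_eq_zero_iff] at hx
  refine (isMaximal_idealOfVars.eq_of_le h𝔭.ne_top ?_).symm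
  exact Ideal.span_le.mpr (Set.range_subset_iff.mpr hx)
end
end

section
/- Let 𝓛 ⊂ ℤ^s be a lattice of rank s - 1 which is homogeneous with respect to a positive weight vector ω. Then for any two distinct indices i, k there exist positive integers r_i, r_k with r_i ω_i = r_k ω_k and r_i e_i - r_k e_k ∈ 𝓛. -/
open MvPolynomial

noncomputable section

/-! The weight form `a ↦ ∑ aⱼ ωⱼ` is a nonzero functional on `ℤ^s`, so its kernel has rank `s - 1`.
The lattice `𝓛` lies in that kernel and has the same rank, hence the kernel modulo `𝓛` is torsion.
Since `ωₖ eᵢ - ωᵢ eₖ` lies in the kernel, some positive multiple `n (ωₖ eᵢ - ωᵢ eₖ)` lies in `𝓛`,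
and `rᵢ = n ωₖ`, `rₖ = n ωᵢ` work. -/

open Module

theorem Submodule.exists_smul_mem_of_finrank_eq {R M : Type*} [CommRing R] [IsDomain R]
    [AddCommGroup M] [Module R M] [Module.Finite R M] {N : Submodule R M}
    (h : finrank R N = finrank R M) (x : M) : ∃ a : R, a ≠ 0 ∧ a • x ∈ N := by
  have hquot : finrank R (M ⧸ N) = 0 := by
    have := N.finrank_quotient_add_finrank
    omega
  obtain ⟨a, ha, hax⟩ := finrank_eq_zero_iff.mp hquot (Submodule.Quotient.mk x)
  rw [← Submodule.Quotient.mk_smul, Submodule.Quotient.mk_eq_zero] at hax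
  exact ⟨a, ha, hax⟩

theorem Submodule.exists_pos_smul_mem_of_finrank_eq {M : Type*} [AddCommGroup M]
    [Module.Finite ℤ M] {N : Submodule ℤ M} (h : finrank ℤ N = finrank ℤ M) (x : M) :
    ∃ n : ℕ, 0 < n ∧ (n : ℤ) • x ∈ N := by
  obtain ⟨a, ha, hax⟩ := N.exists_smul_mem_of_finrank_eq h x
  refine ⟨a.natAbs, Int.natAbs_pos.mpr ha, ?_⟩
  rcases Int.natAbs_eq a with hpos | hneg
  · rwa [← hpos]
  · rw [Int.natCast_natAbs, abs_of_neg (by omega : a < 0), neg_smul]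
    exact N.neg_mem hax

theorem LinearMap.finrank_ker_add_one_of_ne_zero {R M : Type*} [CommRing R] [IsDomain R]
    [AddCommGroup M] [Module R M] [Module.Finite R M] {f : M →ₗ[R] R} (hf : f ≠ 0) :
    finrank R (ker f) + 1 = finrank R M := by
  suffices finrank R (range f) = 1 by
    rw [← (ker f).finrank_quotient_add_finrank, add_comm, add_left_inj,
      f.quotKerEquivRange.finrank_eq, this]
  have hpos : 0 < finrank R (range f) := by
    obtain ⟨x, hx⟩ := DFunLike.ne_iff.mp hf
    exact finrank_pos_iff_exists_ne_zero.mpr ⟨⟨f x, mem_range_self f x⟩, by simpa using hx⟩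
  have hle : finrank R (range f) ≤ 1 := (Submodule.finrank_le _).trans (finrank_self R).le
  omega

theorem homogeneous_rank_lattice_contains_binomial_vectors_general {s : ℕ}
    (w : Fin s → ℕ) (hw : ∀ i, 0 < w i)
    (𝓛 : Submodule ℤ (Fin s → ℤ)) (hhom : ∀ a ∈ 𝓛, ∑ i, a i * (w i : ℤ) = 0)
    (hrk : Module.finrank ℤ 𝓛 = s - 1)
    (i k : Fin s) :
    ∃ ri rk : ℕ, 0 < ri ∧ 0 < rk ∧ ri * w i = rk * w k ∧
      (ri : ℤ) • Pi.single i (1 : ℤ) - (rk : ℤ) • Pi.single k (1 : ℤ) ∈ 𝓛 := by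
  classical
  set φ := Fintype.linearCombination ℤ fun j => (w j : ℤ)
  have hφ : φ ≠ 0 := fun h => by
    simpa [φ, (hw i).ne'] using LinearMap.congr_fun h (Pi.single i 1)
  have hle : 𝓛 ≤ LinearMap.ker φ := fun a ha => by
    simpa [φ, Fintype.linearCombination_apply] using hhom a ha
  have hker : finrank ℤ (LinearMap.ker φ) = s - 1 := by
    have := LinearMap.finrank_ker_add_one_of_ne_zero hφ
    rw [finrank_fin_fun] at this
    omega
  obtain ⟨n, hn, hmem⟩ := Submodule.exists_pos_smul_mem_of_finrank_eq
    (N := 𝓛.comap (LinearMap.ker φ).subtype)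
    (by rw [(Submodule.comapSubtypeEquivOfLe hle).finrank_eq, hrk, hker])
    ⟨(w k : ℤ) • Pi.single i 1 - (w i : ℤ) • Pi.single k 1, by
      rw [LinearMap.mem_ker, map_sub, map_smul, map_smul]
      simp [φ, mul_comm]⟩
  refine ⟨n * w k, n * w i, Nat.mul_pos hn (hw k), Nat.mul_pos hn (hw i), by ring, ?_⟩
  simpa [smul_sub, smul_smul, mul_assoc] using hmem

theorem homogeneous_rank_lattice_contains_binomial_vectors {s : ℕ}
    (w : Fin s → ℕ) (hw : ∀ i, 0 < w i)
    (𝓛 : Submodule ℤ (Fin s → ℤ)) (hhom : ∀ a ∈ 𝓛, ∑ i, a i * (w i : ℤ) = 0)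
    (hrk : Module.finrank ℤ 𝓛 = s - 1)
    (i k : Fin s) (hik : i ≠ k) :
    ∃ ri rk : ℕ, 0 < ri ∧ 0 < rk ∧ ri * w i = rk * w k ∧
      (ri : ℤ) • Pi.single i (1 : ℤ) - (rk : ℤ) • Pi.single k (1 : ℤ) ∈ 𝓛 :=
  homogeneous_rank_lattice_contains_binomial_vectors_general w hw 𝓛 hhom hrk i k
end
end
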